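/- Let f : I → ℝ be differentiable on the interior of I with f' integrable, and suppose |f'| is convex on [a,b]. For any partition a = x_0 < x_1 < ... < x_n = b, the midpoint-quadrature error satisfies |∫_a^b f(x)dx - Σ_{i=0}^{n-1} f((x_i+x_{i+1})/2)(x_{i+1}-x_i)| ≤ (1/2^{(2p+1)/p}) Σ_{i=0}^{n-1} ((x_{i+1}-x_i)²/2)(|f'(x_i)| + |f'(x_{i+1})|), for any p > 1; in particular (letting p → ∞ being not needed) the bound with constant 1/8 holds: |R| ≤ (1/8) Σ_i (x_{i+1}-x_i)²(|f'(x_i)|+|f'(x_{i+1})|). -/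

import Mathlib

/-!
On a cell with midpoint `m` and half-length `δ` the midpoint error is `∫₀^δ F`, where
`F s = f (m + s) + f (m - s) - 2 f m`; thus `F 0 = 0` and `F' s = f' (m + s) - f' (m - s)`.
Convexity of `|f'|` gives `(δ + s) |F' s| ≤ 2 s (|f' (m - δ)| + |f' (m + δ)|)`: if `f' (m - s)` and
`f' (m + s)` have the same sign, compare `|f'|` at `m ± s` with its chords to the far endpoints;
otherwise Darboux's theorem gives a zero of `f'` between `m - s` and `m + s`, and the chords from
that zero to the endpoints bound `|f' (m ± s)|`. Bounding `2 s / (δ + s)` by a tangent line and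
integrating twice bounds the cell error by `(2 δ) ^ 2 (|f' (m - δ)| + |f' (m + δ)|) / 16`, and
`2 ^ ((2 p + 1) / p) ≤ 8` for `p ≥ 1`.
-/

open Set MeasureTheory intervalIntegral Real Finset

section Chord

variable {s : Set ℝ} {g : ℝ → ℝ} {x y z v : ℝ}

theorem ConvexOn.sub_mul_le_add_mul (hg : ConvexOn ℝ s g) (hx : x ∈ s) (hz : z ∈ s)
    (hxy : x ≤ y) (hyz : y ≤ z) : (z - x) * g y ≤ (z - y) * g x + (y - x) * g z := by
  rcases hxy.eq_or_lt with rfl | hxy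
  · linarith
  rcases hyz.eq_or_lt with rfl | hyz
  · linarith
  exact hg.secant_mono_aux1 hx hz hxy hyz

theorem ConvexOn.comp_neg (hg : ConvexOn ℝ s g) : ConvexOn ℝ (-s) fun x => g (-x) :=
  hg.comp_linearMap (-LinearMap.id)

theorem ConvexOn.sub_mul_sub_le_of_nonneg (hg : ConvexOn ℝ s g) (hx : x ∈ s) (hv : v ∈ s)
    (hxy : x ≤ y) (hyv : y ≤ v) (hgx : 0 ≤ g x) : (v - x) * (g y - g x) ≤ (y - x) * g v := by
  linarith [hg.sub_mul_le_add_mul hx hv hxy hyv, mul_nonneg (sub_nonneg.2 hxy) hgx]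

theorem ConvexOn.sub_mul_le_of_eq_zero (hg : ConvexOn ℝ s g) (hz : z ∈ s) (hv : v ∈ s)
    (hxz : x ≤ z) (hzy : z ≤ y) (hyv : y ≤ v) (hgz : g z = 0) (hgv : 0 ≤ g v) :
    (v - x) * g y ≤ (y - x) * g v := by
  rcases hzy.trans hyv |>.eq_or_lt with rfl | hzv
  · obtain rfl : y = z := le_antisymm hyv hzy
    exact le_rfl
  have hchord := hg.sub_mul_le_add_mul hz hv hzy hyv
  rw [hgz, mul_zero, zero_add] at hchord
  refine le_of_mul_le_mul_left ?_ (sub_pos.2 hzv)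
  nlinarith [mul_nonneg (mul_nonneg (sub_nonneg.2 hyv) (sub_nonneg.2 hxz)) hgv]

end Chord

theorem sub_mul_abs_deriv_sub_le {f f' : ℝ → ℝ} {u x y v : ℝ}
    (hf : ∀ t ∈ Icc u v, HasDerivAt f (f' t) t)
    (hconv : ConvexOn ℝ (Icc u v) fun t => |f' t|)
    (hux : u ≤ x) (hxy : x ≤ y) (hyv : y ≤ v) (hsymm : x + y = u + v) :
    (v - x) * |f' y - f' x| ≤ (y - x) * (|f' u| + |f' v|) := by
  have hrefl := hconv.comp_neg
  have hvx : 0 ≤ v - x := by linarith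
  rcases le_or_gt 0 (f' x * f' y) with hsame | hopp
  · have hright := hconv.sub_mul_sub_le_of_nonneg (x := x) (v := v) ⟨hux, by linarith⟩
      ⟨by linarith, le_rfl⟩ hxy hyv (abs_nonneg _)
    have hleft := hrefl.sub_mul_sub_le_of_nonneg (x := -y) (y := -x) (v := -u)
      (neg_mem_neg.2 ⟨by linarith, hyv⟩) (neg_mem_neg.2 ⟨le_rfl, by linarith⟩)
      (neg_le_neg hxy) (neg_le_neg hux) (abs_nonneg _)
    rw [show -u - -y = v - x by linarith, neg_sub_neg] at hleft
    simp only [neg_neg] at hleft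
    have habs : |f' y - f' x| = abs (|f' y| - |f' x|) := by
      rcases mul_nonneg_iff.1 hsame with ⟨hx, hy⟩ | ⟨hx, hy⟩
      · rw [abs_of_nonneg hx, abs_of_nonneg hy]
      · rw [abs_of_nonpos hx, abs_of_nonpos hy, neg_sub_neg, abs_sub_comm]
    rw [habs, ← abs_of_nonneg hvx, ← abs_mul, abs_le]
    constructor <;> nlinarith [abs_nonneg (f' u), abs_nonneg (f' v)]
  · obtain ⟨z, ⟨hxz, hzy⟩, hz⟩ : ∃ z ∈ Icc x y, f' z = 0 := by
      have hdarboux := ordConnected_Icc.image_hasDerivWithinAt (f := f) (f' := f') (s := Icc x y)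
        fun t ht => (hf t ⟨hux.trans ht.1, ht.2.trans hyv⟩).hasDerivWithinAt
      refine hdarboux.uIcc_subset (mem_image_of_mem _ ⟨le_rfl, hxy⟩)
        (mem_image_of_mem _ ⟨hxy, le_rfl⟩) ?_
      rcases mul_neg_iff.1 hopp with ⟨hx, hy⟩ | ⟨hx, hy⟩
      · exact mem_uIcc.2 (Or.inr ⟨hy.le, hx.le⟩)
      · exact mem_uIcc.2 (Or.inl ⟨hx.le, hy.le⟩)
    have hright := hconv.sub_mul_le_of_eq_zero (z := z) (v := v) ⟨by linarith, by linarith⟩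
      ⟨by linarith, le_rfl⟩ hxz hzy hyv (by simp [hz]) (abs_nonneg _)
    have hleft := hrefl.sub_mul_le_of_eq_zero (x := -y) (z := -z) (y := -x) (v := -u)
      (neg_mem_neg.2 ⟨by linarith, by linarith⟩) (neg_mem_neg.2 ⟨le_rfl, by linarith⟩)
      (neg_le_neg hzy) (neg_le_neg hxz) (neg_le_neg hux) (by simp [hz]) (abs_nonneg _)
    rw [show -u - -y = v - x by linarith, neg_sub_neg] at hleft
    simp only [neg_neg] at hleft
    calc (v - x) * |f' y - f' x| ≤ (v - x) * (|f' y| + |f' x|) :=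
          mul_le_mul_of_nonneg_left (abs_sub _ _) hvx
      _ ≤ (y - x) * (|f' u| + |f' v|) := by linarith

theorem abs_add_sub_two_mul_le {f f' : ℝ → ℝ} {m δ : ℝ} (hδ : 0 < δ)
    (hf : ∀ t ∈ Icc (m - δ) (m + δ), HasDerivAt f (f' t) t)
    (hconv : ConvexOn ℝ (Icc (m - δ) (m + δ)) fun t => |f' t|) {s : ℝ} (hs : s ∈ Icc 0 δ) :
    |f (m + s) + f (m - s) - 2 * f m| ≤
      (|f' (m - δ)| + |f' (m + δ)|) * (9 * s ^ 2 + 2 * δ * s) / (16 * δ) := by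
  set C := |f' (m - δ)| + |f' (m + δ)|
  have hderiv : ∀ s ∈ Icc 0 δ, HasDerivAt (fun s => f (m + s) + f (m - s) - 2 * f m)
      (f' (m + s) - f' (m - s)) s := by
    intro s ⟨hs₀, hsδ⟩
    have hplus := (hf (m + s) ⟨by linarith, by linarith⟩).comp s ((hasDerivAt_id s).const_add m)
    have hminus := (hf (m - s) ⟨by linarith, by linarith⟩).comp s ((hasDerivAt_id s).const_sub m)
    simpa [sub_eq_add_neg] using (hplus.add hminus).sub_const (2 * f m)
  -- `(9 s + δ) / (8 δ)` is the tangent at `s = δ / 3` of the concave function `2 s / (δ + s)`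
  have hbound : ∀ s ∈ Ico 0 δ, ‖f' (m + s) - f' (m - s)‖ ≤ C * (18 * s + 2 * δ) / (16 * δ) := by
    intro s ⟨hs₀, hsδ⟩
    have h := sub_mul_abs_deriv_sub_le hf hconv (x := m - s) (y := m + s) (by linarith)
      (by linarith) (by linarith) (by ring)
    rw [Real.norm_eq_abs, le_div_iff₀ (by positivity)]
    refine le_of_mul_le_mul_left ?_ (by linarith : 0 < δ + s)
    nlinarith [mul_nonneg (by positivity : 0 ≤ C) (sq_nonneg (3 * s - δ))]
  refine image_norm_le_of_norm_deriv_right_le_deriv_boundary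
    (B := fun s => C * (9 * s ^ 2 + 2 * δ * s) / (16 * δ))
    (fun s hs => (hderiv s hs).continuousAt.continuousWithinAt)
    (fun s hs => (hderiv s (Ico_subset_Icc_self hs)).hasDerivWithinAt) (by simp [← two_mul])
    (fun s => ?_) hbound hs
  exact (((((hasDerivAt_id' s).pow 2).const_mul 9).add
    ((hasDerivAt_id' s).const_mul (2 * δ))).const_mul C |>.div_const (16 * δ)).congr_deriv
    (by ring)

theorem integral_sub_two_mul_eq_integral {f : ℝ → ℝ} {m δ : ℝ} (hδ : 0 ≤ δ)
    (hf : ContinuousOn f (Icc (m - δ) (m + δ))) :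
    (∫ x in (m - δ)..(m + δ), f x) - 2 * δ * f m =
      ∫ s in 0..δ, (f (m + s) + f (m - s) - 2 * f m) := by
  have hplus : IntervalIntegrable (fun s => f (m + s)) volume 0 δ := by
    refine (hf.comp (by fun_prop) fun s hs => ?_).intervalIntegrable
    rw [uIcc_of_le hδ] at hs
    constructor <;> linarith [hs.1, hs.2]
  have hminus : IntervalIntegrable (fun s => f (m - s)) volume 0 δ := by
    refine (hf.comp (by fun_prop) fun s hs => ?_).intervalIntegrable
    rw [uIcc_of_le hδ] at hs
    constructor <;> linarith [hs.1, hs.2]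
  have hint : ∀ {a b}, a ∈ Icc (m - δ) (m + δ) → b ∈ Icc (m - δ) (m + δ) →
      IntervalIntegrable f volume a b := fun ha hb =>
    (hf.mono (ordConnected_Icc.uIcc_subset ha hb)).intervalIntegrable
  rw [← integral_add_adjacent_intervals (b := m) (hint ?_ ?_) (hint ?_ ?_),
    integral_sub (hplus.add hminus) intervalIntegrable_const, integral_add hplus hminus,
    integral_comp_add_left, integral_comp_sub_left, intervalIntegral.integral_const, add_zero,
    sub_zero, smul_eq_mul]
  · ring
  all_goals constructor <;> linarith

theorem abs_integral_sub_mul_midpoint_le {f f' : ℝ → ℝ} {u v : ℝ} (huv : u < v)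
    (hf : ∀ t ∈ Icc u v, HasDerivAt f (f' t) t)
    (hconv : ConvexOn ℝ (Icc u v) fun t => |f' t|) :
    |(∫ t in u..v, f t) - f ((u + v) / 2) * (v - u)| ≤
      (v - u) ^ 2 * (|f' u| + |f' v|) / 16 := by
  obtain ⟨m, δ, rfl, rfl⟩ : ∃ m δ, u = m - δ ∧ v = m + δ :=
    ⟨(u + v) / 2, (v - u) / 2, by ring, by ring⟩
  have hδ : 0 < δ := by linarith
  rw [show (m - δ + (m + δ)) / 2 = m by ring, show f m * (m + δ - (m - δ)) = 2 * δ * f m by ring,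
    integral_sub_two_mul_eq_integral hδ.le fun t ht => (hf t ht).continuousAt.continuousWithinAt]
  calc |∫ s in 0..δ, (f (m + s) + f (m - s) - 2 * f m)|
      ≤ ∫ s in 0..δ, (|f' (m - δ)| + |f' (m + δ)|) * (9 * s ^ 2 + 2 * δ * s) / (16 * δ) := by
        rw [← Real.norm_eq_abs]
        refine norm_integral_le_of_norm_le hδ.le (ae_of_all _ fun s hs => ?_) ?_
        · exact abs_add_sub_two_mul_le hδ hf hconv (Ioc_subset_Icc_self hs)
        · exact Continuous.intervalIntegrable (by fun_prop) _ _
    _ = (m + δ - (m - δ)) ^ 2 * (|f' (m - δ)| + |f' (m + δ)|) / 16 := by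
      rw [intervalIntegral.integral_div, intervalIntegral.integral_const_mul,
        intervalIntegral.integral_add, intervalIntegral.integral_const_mul,
        intervalIntegral.integral_const_mul, integral_pow, integral_id]
      · field_simp
        ring
      all_goals exact Continuous.intervalIntegrable (by fun_prop) _ _

theorem monotoneOn_Iic_of_le_succ {α : Type*} [Preorder α] {x : ℕ → α} {n : ℕ}
    (h : ∀ i < n, x i ≤ x (i + 1)) : MonotoneOn x (Set.Iic n) := by
  intro i _ j hj hij
  induction j, hij using Nat.le_induction with
  | base => exact le_rfl
  | succ j _ ih => exact (ih (Nat.le_of_succ_le hj)).trans (h j hj)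

theorem two_rpow_two_add_one_div_le_eight {p : ℝ} (hp : 1 ≤ p) :
    (2 : ℝ) ^ ((2 * p + 1) / p) ≤ 8 := by
  calc (2 : ℝ) ^ ((2 * p + 1) / p) ≤ 2 ^ (3 : ℝ) :=
        rpow_le_rpow_of_exponent_le (by norm_num) ((div_le_iff₀ (by linarith)).2 (by linarith))
    _ = 8 := by norm_num

theorem midpoint_quadrature_error_general
    (f : ℝ → ℝ) (a b p : ℝ) (I : Set ℝ) (hI : IsOpen I) (hIcc : Icc a b ⊆ I)
    (hp : 1 < p)
    (hf : DifferentiableOn ℝ f I)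
    (hconv : ConvexOn ℝ (Icc a b) (fun x => |deriv f x|))
    (n : ℕ) (x : ℕ → ℝ) (hx0 : x 0 = a) (hxn : x n = b)
    (hmono : ∀ i < n, x i < x (i + 1)) :
    |(∫ t in a..b, f t) -
        ∑ i ∈ Finset.range n, f ((x i + x (i + 1)) / 2) * (x (i + 1) - x i)| ≤
      (1 / 2 ^ ((2 * p + 1) / p)) *
        ∑ i ∈ Finset.range n,
          (x (i + 1) - x i) ^ 2 / 2 * (|deriv f (x i)| + |deriv f (x (i + 1))|) ∧
    |(∫ t in a..b, f t) -
        ∑ i ∈ Finset.range n, f ((x i + x (i + 1)) / 2) * (x (i + 1) - x i)| ≤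
      (1 / 8) *
        ∑ i ∈ Finset.range n,
          (x (i + 1) - x i) ^ 2 * (|deriv f (x i)| + |deriv f (x (i + 1))|) := by
  have hmonoOn := monotoneOn_Iic_of_le_succ fun i hi => (hmono i hi).le
  have hcell : ∀ i < n, Icc (x i) (x (i + 1)) ⊆ Icc a b := fun i hi =>
    Set.Icc_subset_Icc (hx0 ▸ hmonoOn (Nat.zero_le n) hi.le (Nat.zero_le i))
      (hxn ▸ hmonoOn hi (Set.mem_Iic.2 le_rfl) hi)
  have hderiv : ∀ t ∈ Icc a b, HasDerivAt f (deriv f t) t := fun t ht =>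
    (hf.differentiableAt (hI.mem_nhds (hIcc ht))).hasDerivAt
  have hint : ∀ i < n, IntervalIntegrable f volume (x i) (x (i + 1)) := fun i hi =>
    ContinuousOn.intervalIntegrable_of_Icc (hmono i hi).le fun t ht =>
      (hderiv t (hcell i hi ht)).continuousAt.continuousWithinAt
  set T := ∑ i ∈ range n, (x (i + 1) - x i) ^ 2 * (|deriv f (x i)| + |deriv f (x (i + 1))|)
  have htotal : |(∫ t in a..b, f t) -
      ∑ i ∈ range n, f ((x i + x (i + 1)) / 2) * (x (i + 1) - x i)| ≤ T / 16 := by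
    rw [← hx0, ← hxn, ← sum_integral_adjacent_intervals hint, ← sum_sub_distrib, sum_div]
    exact (abs_sum_le_sum_abs _ _).trans (sum_le_sum fun i hi =>
      abs_integral_sub_mul_midpoint_le (hmono i (mem_range.1 hi))
        (fun t ht => hderiv t (hcell i (mem_range.1 hi) ht))
        (hconv.subset (hcell i (mem_range.1 hi)) (convex_Icc _ _)))
  have hT : 0 ≤ T := sum_nonneg fun i _ => by positivity
  have hcoef : (1 : ℝ) / 16 ≤ 1 / 2 ^ ((2 * p + 1) / p) / 2 := by
    rw [div_div]
    exact one_div_le_one_div_of_le (by positivity)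
      (by linarith [two_rpow_two_add_one_div_le_eight hp.le])
  simp_rw [div_mul_eq_mul_div _ (2 : ℝ), ← sum_div]
  constructor <;> linarith [mul_le_mul_of_nonneg_right hcoef hT]

theorem midpoint_quadrature_error
    (f : ℝ → ℝ) (a b p : ℝ) (I : Set ℝ) (hI : IsOpen I) (hIcc : Icc a b ⊆ I)
    (hab : a < b) (hp : 1 < p)
    (hf : DifferentiableOn ℝ f I)
    (hint : IntervalIntegrable (deriv f) volume a b)
    (hconv : ConvexOn ℝ (Icc a b) (fun x => |deriv f x|))
    (n : ℕ) (x : ℕ → ℝ) (hx0 : x 0 = a) (hxn : x n = b)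
    (hmono : ∀ i < n, x i < x (i + 1)) :
    |(∫ t in a..b, f t) -
        ∑ i ∈ Finset.range n, f ((x i + x (i + 1)) / 2) * (x (i + 1) - x i)| ≤
      (1 / 2 ^ ((2 * p + 1) / p)) *
        ∑ i ∈ Finset.range n,
          (x (i + 1) - x i) ^ 2 / 2 * (|deriv f (x i)| + |deriv f (x (i + 1))|) ∧
    |(∫ t in a..b, f t) -
        ∑ i ∈ Finset.range n, f ((x i + x (i + 1)) / 2) * (x (i + 1) - x i)| ≤
      (1 / 8) *
        ∑ i ∈ Finset.range n,
          (x (i + 1) - x i) ^ 2 * (|deriv f (x i)| + |deriv f (x (i + 1))|) :=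
  midpoint_quadrature_error_general f a b p I hI hIcc hp hf hconv n x hx0 hxn hmono
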